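/- For any prime p and integer i with 1 ≤ i ≤ p−1, the Gaussian binomial coefficient C(p, i)_q is divisible by [p]_q in ℤ[q]. -/
import Mathlib


open Polynomial Finset

noncomputable def qInt (n : ℕ) : Polynomial ℤ := ∑ i ∈ Finset.range n, X ^ i

noncomputable def qBinom : ℕ → ℕ → Polynomial ℤ
  | _, 0 => 1
  | 0, _ + 1 => 0
  | n + 1, k + 1 => qBinom n k + X ^ (k + 1) * qBinom n (k + 1)

lemma qInt_zero : qInt 0 = 0 := by simp [qInt]

lemma qInt_succ' (n : ℕ) : qInt (n + 1) = qInt n + X ^ n := by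
  simp [qInt, Finset.sum_range_succ]

lemma qInt_one : qInt 1 = 1 := by simp [qInt]

lemma qInt_add (a b : ℕ) : qInt (a + b) = qInt a + X ^ a * qInt b := by
  induction b with
  | zero => simp [qInt_zero]
  | succ b ih =>
    rw [Nat.add_succ, qInt_succ', ih, qInt_succ', pow_add]; ring

lemma qBinom_zero_right (n : ℕ) : qBinom n 0 = 1 := by cases n <;> rfl

lemma qBinom_succ_succ (n k : ℕ) :
    qBinom (n + 1) (k + 1) = qBinom n k + X ^ (k + 1) * qBinom n (k + 1) := rfl

lemma qBinom_of_lt : ∀ {n k : ℕ}, n < k → qBinom n k = 0 := by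
  intro n
  induction n with
  | zero =>
    intro k hk
    match k, hk with
    | (j+1), _ => rfl
  | succ n ih =>
    intro k hk
    match k, hk with
    | (j+1), hk =>
      rw [qBinom_succ_succ, ih (by omega), ih (by omega)]
      ring

lemma qBinom_key (n : ℕ) : ∀ k,
    qInt (k + 1) * qBinom (n + 1) (k + 1) = qInt (n + 1) * qBinom n k ∧
    qInt (n + 1 - k) * qBinom (n + 1) k = qInt (n + 1) * qBinom n k := by
  induction n with
  | zero =>
    intro k
    match k with
    | 0 =>
      constructor <;> simp [qBinom_succ_succ, qBinom_zero_right, qBinom, qInt_one]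
    | (j+1) =>
      constructor
      · rw [qBinom_of_lt (n := 1) (k := j + 2) (by omega),
          qBinom_of_lt (n := 0) (k := j + 1) (by omega)]
        ring
      · rw [show 0 + 1 - (j + 1) = 0 by omega, qInt_zero,
          qBinom_of_lt (n := 0) (k := j + 1) (by omega)]
        ring
  | succ n ih =>
    intro k
    have hcomb : qInt (k + 1) * qBinom (n + 1) (k + 1) =
        qInt (n + 1 - k) * qBinom (n + 1) k := (ih k).1.trans (ih k).2.symm
    constructor
    · by_cases hk : k ≤ n + 1
      · have hdecomp : qInt (n + 1 + 1) = qInt (k + 1) + X ^ (k + 1) * qInt (n + 1 - k) := by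
          rw [← qInt_add]; congr 1; omega
        rw [qBinom_succ_succ, hdecomp]
        linear_combination (X : Polynomial ℤ) ^ (k + 1) * hcomb
      · rw [qBinom_of_lt (n := n + 1) (k := k) (by omega),
          qBinom_succ_succ, qBinom_of_lt (n := n + 1) (k := k) (by omega),
          qBinom_of_lt (n := n + 1) (k := k + 1) (by omega)]
        ring
    · match k with
      | 0 => simp [qBinom_zero_right]
      | (j+1) =>
        have hcomb' : qInt (j + 1) * qBinom (n + 1) (j + 1) =
            qInt (n + 1 - j) * qBinom (n + 1) j := (ih j).1.trans (ih j).2.symm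
        by_cases hj : j ≤ n + 1
        · have hdecomp : qInt (n + 1 + 1) = qInt (j + 1) + X ^ (j + 1) * qInt (n + 1 - j) := by
            rw [← qInt_add]; congr 1; omega
          rw [show n + 1 + 1 - (j + 1) = n + 1 - j by omega, qBinom_succ_succ, hdecomp]
          linear_combination (-1 : Polynomial ℤ) * hcomb'
        · rw [qBinom_of_lt (n := n + 1 + 1) (k := j + 1) (by omega),
            qBinom_of_lt (n := n + 1) (k := j + 1) (by omega)]
          ring

lemma qInt_degree_le (n : ℕ) : (qInt n).degree ≤ ((n - 1 : ℕ) : WithBot ℕ) := by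
  refine (Polynomial.degree_sum_le _ _).trans ?_
  refine Finset.sup_le fun j hj => ?_
  rw [Polynomial.degree_X_pow]
  have hle : j ≤ n - 1 := by simp only [Finset.mem_range] at hj; omega
  exact_mod_cast hle

lemma qInt_ne_zero {n : ℕ} (hn : 1 ≤ n) : qInt n ≠ 0 := by
  intro h0
  have h1 : (qInt n).coeff 0 = 1 := by
    simp [qInt, Polynomial.finset_sum_coeff, Polynomial.coeff_X_pow]
    omega
  rw [h0] at h1
  simp at h1

lemma qInt_eq_cyclotomic {p : ℕ} (hp : p.Prime) : qInt p = Polynomial.cyclotomic p ℤ := by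
  haveI := Fact.mk hp
  rw [Polynomial.cyclotomic_prime]
  rfl

theorem qInt_dvd_qBinom (p : ℕ) (hp : p.Prime) (i : ℕ) (hi1 : 1 ≤ i) (hi2 : i ≤ p - 1) :
    qInt p ∣ qBinom p i := by
  have h2 : 2 ≤ p := hp.two_le
  have hkey := (qBinom_key (p - 1) (i - 1)).1
  rw [show p - 1 + 1 = p by omega, show i - 1 + 1 = i by omega] at hkey
  have hdvd : qInt p ∣ qInt i * qBinom p i := ⟨qBinom (p - 1) (i - 1), hkey⟩
  have hprime : Prime (qInt p) := by
    rw [qInt_eq_cyclotomic hp]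
    exact (UniqueFactorizationMonoid.irreducible_iff_prime.mp
      (Polynomial.cyclotomic.irreducible (by omega)))
  rcases hprime.dvd_or_dvd hdvd with h | h
  · exfalso
    have hne : qInt i ≠ 0 := qInt_ne_zero hi1
    have hdeg := Polynomial.degree_le_of_dvd h hne
    have hdegp : (qInt p).degree = ((p - 1 : ℕ) : WithBot ℕ) := by
      rw [qInt_eq_cyclotomic hp, Polynomial.degree_cyclotomic, Nat.totient_prime hp]
    have hdegi := qInt_degree_le i
    rw [hdegp] at hdeg
    have : (p - 1 : ℕ) ≤ (i - 1 : ℕ) := by exact_mod_cast hdeg.trans hdegi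
    omega
  · exact h
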